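/- Let n ≥ 2 and let p = (p_1,…,p_n) ∈ [0,1]^n with 0 ≤ p_1 ≤ p_2 ≤ … ≤ p_n ≤ 1. Then min( ∑_{i=1}^n p_i, 1 ) ≤ (4/3)·min( ∑_{i=1}^n p_i − p_n·(∑_{i=1}^{n−1} p_i), 1 ). Moreover, if p_n = 1/2 and ∑_{i=1}^{n−1} p_i = 1/2, then equality holds, i.e., min( ∑_{i=1}^n p_i, 1 ) = (4/3)·min( ∑_{i=1}^n p_i − p_n·(∑_{i=1}^{n−1} p_i), 1 ). -/
import Mathlib


open Finset

noncomputable section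

/-- Probability that at least `k` of the `n` coordinates equal `1` under the pmf `θ` on `{0,1}^n`. -/
def probGE (n : ℕ) (θ : (Fin n → Bool) → ℝ) (k : ℕ) : ℝ :=
  ∑ c ∈ Finset.univ.filter
      (fun c : Fin n → Bool => k ≤ (Finset.univ.filter (fun i => c i = true)).card), θ c

/-- Probability that all `n` coordinates equal `1` under the pmf `θ` on `{0,1}^n`. -/
def probAll (n : ℕ) (θ : (Fin n → Bool) → ℝ) : ℝ :=
  ∑ c ∈ Finset.univ.filter (fun c : Fin n → Bool => ∀ i, c i = true), θ c

/-- `θ` is a probability mass function on `{0,1}^n`. -/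
def IsDist (n : ℕ) (θ : (Fin n → Bool) → ℝ) : Prop :=
  (∀ c, 0 ≤ θ c) ∧ (∑ c, θ c = 1)

/-- Univariate marginal probability `P_θ(c_i = 1)`. -/
def Marg (n : ℕ) (θ : (Fin n → Bool) → ℝ) (i : Fin n) : ℝ :=
  ∑ c ∈ Finset.univ.filter (fun c : Fin n → Bool => c i = true), θ c

/-- Bivariate probability `P_θ(c_i = 1, c_j = 1)`. -/
def Biv (n : ℕ) (θ : (Fin n → Bool) → ℝ) (i j : Fin n) : ℝ :=
  ∑ c ∈ Finset.univ.filter (fun c : Fin n → Bool => c i = true ∧ c j = true), θ c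

/-- `θ` is a pairwise independent distribution with marginal vector `p`. -/
def PairwiseIndep (n : ℕ) (p : Fin n → ℝ) (θ : (Fin n → Bool) → ℝ) : Prop :=
  IsDist n θ ∧ (∀ i, Marg n θ i = p i) ∧
    (∀ i j : Fin n, i < j → Biv n θ i j = p i * p j)

theorem stmt_4 (n : ℕ) (hn : 2 ≤ n) (p : Fin n → ℝ)
    (hp0 : ∀ i, 0 ≤ p i) (hp1 : ∀ i, p i ≤ 1) (hmono : Monotone p) :
    min (∑ i, p i) 1 ≤
      (4 / 3) * min ((∑ i, p i) -
        p ⟨n - 1, by omega⟩ * ∑ i ∈ Finset.univ.erase (⟨n - 1, by omega⟩ : Fin n), p i) 1 ∧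
    (p ⟨n - 1, by omega⟩ = 1 / 2 →
      (∑ i ∈ Finset.univ.erase (⟨n - 1, by omega⟩ : Fin n), p i) = 1 / 2 →
      min (∑ i, p i) 1 =
        (4 / 3) * min ((∑ i, p i) -
          p ⟨n - 1, by omega⟩ * ∑ i ∈ Finset.univ.erase (⟨n - 1, by omega⟩ : Fin n), p i) 1) := by
  have hq0 : 0 ≤ p ⟨n - 1, by omega⟩ := hp0 _
  have hq1 : p ⟨n - 1, by omega⟩ ≤ 1 := hp1 _
  have hT0 : 0 ≤ ∑ i ∈ Finset.univ.erase (⟨n - 1, by omega⟩ : Fin n), p i :=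
    Finset.sum_nonneg fun i _ => hp0 i
  have hS : ∑ i, p i = p ⟨n - 1, by omega⟩ +
      ∑ i ∈ Finset.univ.erase (⟨n - 1, by omega⟩ : Fin n), p i := by
    rw [Finset.add_sum_erase _ p (Finset.mem_univ _)]
  set q := p ⟨n - 1, by omega⟩ with hq
  set T := ∑ i ∈ Finset.univ.erase (⟨n - 1, by omega⟩ : Fin n), p i with hT
  rw [hS]
  constructor
  · rcases le_or_gt (q + T) 1 with h | h
    · rw [min_eq_left h, min_eq_left (by nlinarith)]
      nlinarith [sq_nonneg (q - T), sq_nonneg (q + T)]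
    · rw [min_eq_right h.le]
      rcases le_total (q + T - q * T) 1 with h2 | h2
      · rw [min_eq_left h2]
        nlinarith [sq_nonneg (q - 1/2), mul_nonneg (by linarith : (0:ℝ) ≤ 1 - q) (by linarith : (0:ℝ) ≤ q + T - 1)]
      · rw [min_eq_right h2]; norm_num
  · intro h1 h2
    rw [h1, h2]; norm_num
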